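/- arXiv:2009.09964 — 6 statements merged into one kernel-verified Lean document; each statement's English description precedes it below -/
import Mathlib

section
/- Let p and q be tracks such that range(h_p) and range(h_q) have no common straight line segment, and let (s,t) be an intersection of p and q with intersection point x. If the alternation condition defining a crossing holds for one admissible radius δ (i.e. δ > 0 such that B(x,δ)∖{x} contains no vertex of p and no vertex of q), then it holds for every admissible radius δ' with 0 < δ' < δ. Hence the definition of a crossing does not depend on the choice of the radius. -/
/-! Since the ball `B(x, δ)` contains no vertex other than `x`, each of the four arcs of `p` and
`q` leaving `x` runs along a straight ray from `x` until it reaches distance `δ`. So the entry and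
exit points at radius `δ'` are the images of those at radius `δ` under the homothety about `x` with
ratio `δ' / δ`, which maps the circle of radius `δ` homeomorphically onto the circle of radius `δ'`
and therefore preserves alternation. -/

noncomputable section

abbrev Plane := EuclideanSpace ℝ (Fin 2)

def pt (a b : ℝ) : Plane := WithLp.toLp 2 ![a, b]

def unitSquare : Set Plane := {z | z 0 ∈ Set.Icc (0:ℝ) 1 ∧ z 1 ∈ Set.Icc (0:ℝ) 1}

structure Track where
  k : ℕ
  s : ℕ → ℝ
  x : ℕ → Plane
  mono : ∀ i < k, s i < s (i + 1)
  ne : ∀ i < k, x i ≠ x (i + 1)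

def Track.seg (p : Track) (t : ℝ) : ℕ := sSup {i | i < p.k ∧ p.s i ≤ t}

def Track.path (p : Track) (t : ℝ) : Plane :=
  p.x (p.seg t) + ((t - p.s (p.seg t)) / (p.s (p.seg t + 1) - p.s (p.seg t))) •
    (p.x (p.seg t + 1) - p.x (p.seg t))

def Track.rangeSet (p : Track) : Set Plane := p.path '' Set.Icc (p.s 0) (p.s p.k)

def Track.V (p : Track) : Set Plane := {z | ∃ i ≤ p.k, z = p.x i}

def line (x y : Plane) : Set Plane := (affineSpan ℝ {x, y} : Set Plane)

def Track.L (p : Track) : Set Plane := {z | ∃ i < p.k, z ∈ line (p.x i) (p.x (i + 1))}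

def Track.Lbar (p : Track) : Set Plane :=
  {z | ∃ i ≤ p.k, ∃ j ≤ p.k, p.x i ≠ p.x j ∧ z ∈ line (p.x i) (p.x j)}

def IsSegSet (S : Set Plane) : Prop := ∃ x y : Plane, x ≠ y ∧ S = segment ℝ x y

def NoCommonSegment (p q : Track) : Prop :=
  ¬ ∃ S : Set Plane, IsSegSet S ∧ S ⊆ p.rangeSet ∧ S ⊆ q.rangeSet

def WSep (p q : Track) : Prop := p.V ∩ q.L = ∅ ∧ q.V ∩ p.L = ∅

def IsInter (p q : Track) (s t : ℝ) : Prop :=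
  p.s 0 < s ∧ s < p.s p.k ∧ q.s 0 < t ∧ t < q.s q.k ∧ p.path s = q.path t

def Admissible (p q : Track) (x : Plane) (δ : ℝ) : Prop :=
  0 < δ ∧ ∀ v ∈ p.V ∪ q.V, v ∈ Metric.ball x δ → v = x

def entryParam (p : Track) (s δ : ℝ) (x : Plane) : ℝ :=
  sInf {s' | s' < s ∧ p.path '' Set.Icc s' s ⊆ Metric.ball x δ}

def exitParam (p : Track) (s δ : ℝ) (x : Plane) : ℝ :=
  sSup {s' | s < s' ∧ p.path '' Set.Icc s s' ⊆ Metric.ball x δ}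

def Alternates (x : Plane) (δ : ℝ) (a b c d : Plane) : Prop :=
  c ∈ Metric.sphere x δ \ {a, b} ∧ d ∈ Metric.sphere x δ \ {a, b} ∧
  connectedComponentIn (Metric.sphere x δ \ {a, b}) c ≠
    connectedComponentIn (Metric.sphere x δ \ {a, b}) d

def CrossAt (p q : Track) (s t δ : ℝ) : Prop :=
  Alternates (p.path s) δ
    (p.path (entryParam p s δ (p.path s))) (p.path (exitParam p s δ (p.path s)))
    (q.path (entryParam q t δ (p.path s))) (q.path (exitParam q t δ (p.path s)))

def IsCrossing (p q : Track) (s t : ℝ) : Prop :=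
  IsInter p q s t ∧ ∃ δ : ℝ, Admissible p q (p.path s) δ ∧ CrossAt p q s t δ

def CN (p q : Track) : ℕ := {st : ℝ × ℝ | IsCrossing p q st.1 st.2}.ncard

def par (p q : Track) : ℕ := CN p q % 2

def ds (A B : Set Plane) : ℝ := sInf {r | ∃ a ∈ A, ∃ b ∈ B, r = ‖a - b‖}

def alphaIJ (f g : ℝ → Plane) (aI bI aJ bJ : ℝ) : ℝ :=
  min (ds {f aI, f bI} (g '' Set.Icc aJ bJ)) (ds {g aJ, g bJ} (f '' Set.Icc aI bI))

def IsModulus2 (f g : ℝ → Plane) (md : ℕ → ℕ) : Prop :=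
  Monotone md ∧ ∀ n : ℕ, ∀ t ∈ Set.Icc (-1:ℝ) 2, ∀ t' ∈ Set.Icc (-1:ℝ) 2,
    |t - t'| < (2:ℝ) ^ (-(md n : ℤ)) →
    ‖f t - f t'‖ < (2:ℝ) ^ (-(n : ℤ)) ∧ ‖g t - g t'‖ < (2:ℝ) ^ (-(n : ℤ))

def IsApprox (f : ℝ → Plane) (md : ℕ → ℕ) (a b : ℝ) (n : ℕ) (p : Track) : Prop :=
  p.s 0 = a ∧ p.s p.k = b ∧
  (∀ i < p.k, p.s (i + 1) - p.s i < (2:ℝ) ^ (-(md n : ℤ))) ∧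
  (∀ i ≤ p.k, ‖f (p.s i) - p.x i‖ < (2:ℝ) ^ (-(n : ℤ)))

def ParityIs (f g : ℝ → Plane) (md : ℕ → ℕ) (aI bI aJ bJ : ℝ) (b : ℕ) : Prop :=
  ∀ n : ℕ, (2:ℝ) ^ (-(n : ℤ)) < alphaIJ f g aI bI aJ bJ / 16 →
    ∀ p q : Track, IsApprox f md aI bI n p → IsApprox g md aJ bJ n q → WSep p q →
      par p q = b

def IsModulus1 (f : ℝ → Plane) (md : ℕ → ℕ) : Prop :=
  Monotone md ∧ ∀ n : ℕ, ∀ t ∈ Set.Icc (-1:ℝ) 2, ∀ t' ∈ Set.Icc (-1:ℝ) 2,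
    |t - t'| < (2:ℝ) ^ (-(md n : ℤ)) → ‖f t - f t'‖ < (2:ℝ) ^ (-(n : ℤ))

def nbhdU (A : Set Plane) (δ : ℝ) : Set Plane := {x | ∃ y ∈ A, ‖x - y‖ < δ}

def extF (φ : ℝ → Plane) (t : ℝ) : Plane :=
  if t ≤ 0 then pt t 0 else if t ≤ 1 then φ t else pt t 1

def extG (ψ : ℝ → Plane) (t : ℝ) : Plane :=
  if t ≤ 0 then pt t 1 else if t ≤ 1 then ψ t else pt t 0


open Set Metric

section Ray

variable {E : Type*} [NormedAddCommGroup E] [NormedSpace ℝ E]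

lemma sSup_image_Icc_subset_ball_of_ray {f : ℝ → E} {x w : E} {s e ρ : ℝ} (hρ : 0 < ρ)
    (hw : w ≠ 0) (hρe : ρ ≤ (e - s) * ‖w‖) (hf : ∀ r ∈ Icc s e, f r = x + (r - s) • w) :
    sSup {s' | s < s' ∧ f '' Icc s s' ⊆ ball x ρ} = s + ρ / ‖w‖ := by
  have hw' : 0 < ‖w‖ := norm_pos_iff.mpr hw
  have hdist : ∀ r ∈ Icc s e, dist (f r) x = (r - s) * ‖w‖ := fun r hr => by
    rw [hf r hr, dist_eq_norm, add_sub_cancel_left, norm_smul,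
      Real.norm_of_nonneg (sub_nonneg.2 hr.1)]
  have hτ : 0 < ρ / ‖w‖ := div_pos hρ hw'
  have hτe : ρ / ‖w‖ ≤ e - s := (div_le_iff₀ hw').2 hρe
  suffices {s' | s < s' ∧ f '' Icc s s' ⊆ ball x ρ} = Ioo s (s + ρ / ‖w‖) by
    rw [this, csSup_Ioo (by linarith)]
  ext s'
  simp only [mem_ofPred_eq, mem_Ioo, image_subset_iff]
  refine and_congr_right fun hs' => ⟨fun h => ?_, fun h r hr => ?_⟩
  · by_contra! hge
    have hmem : s + ρ / ‖w‖ ∈ Icc s e := ⟨by linarith, by linarith⟩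
    have := mem_ball.1 (h ⟨hmem.1, hge⟩)
    rw [hdist _ hmem, add_sub_cancel_left, div_mul_cancel₀ _ hw'.ne'] at this
    exact lt_irrefl _ this
  · have hr' : r ∈ Icc s e := ⟨hr.1, by linarith [hr.2]⟩
    rw [mem_preimage, mem_ball, hdist r hr', ← lt_div_iff₀ hw']
    linarith [hr.2]

lemma sInf_image_Icc_subset_ball_of_ray {f : ℝ → E} {x w : E} {s e ρ : ℝ} (hρ : 0 < ρ)
    (hw : w ≠ 0) (hρe : ρ ≤ (s - e) * ‖w‖) (hf : ∀ r ∈ Icc e s, f r = x + (s - r) • w) :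
    sInf {s' | s' < s ∧ f '' Icc s' s ⊆ ball x ρ} = s - ρ / ‖w‖ := by
  have hreflect : {s' | s' < s ∧ f '' Icc s' s ⊆ ball x ρ} =
      -{s' | -s < s' ∧ (f ∘ Neg.neg) '' Icc (-s) s' ⊆ ball x ρ} := by
    ext s'
    simp only [mem_neg, mem_ofPred_eq, image_comp, image_neg_Icc, neg_neg, neg_lt_neg_iff]
  have hray : ∀ r ∈ Icc (-s) (-e), (f ∘ Neg.neg) r = x + (r - -s) • w := fun r hr => by
    rw [Function.comp_apply, hf (-r) ⟨by linarith [hr.2], by linarith [hr.1]⟩]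
    congr 2
    ring
  rw [hreflect, Real.sInf_neg,
    sSup_image_Icc_subset_ball_of_ray hρ hw (by linarith) hray]
  ring

end Ray

namespace Track

lemma s_strictMonoOn (p : Track) : StrictMonoOn p.s (Iic p.k) :=
  strictMonoOn_Iic_of_lt_succ p.mono

def slope (p : Track) (i : ℕ) : Plane := (p.s (i + 1) - p.s i)⁻¹ • (p.x (i + 1) - p.x i)

variable {p : Track}

lemma slope_ne_zero {i : ℕ} (hi : i < p.k) : p.slope i ≠ 0 :=
  smul_ne_zero (inv_ne_zero (sub_ne_zero.2 (p.mono i hi).ne')) (sub_ne_zero.2 (p.ne i hi).symm)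

lemma x_add_slope {i : ℕ} (hi : i < p.k) :
    p.x i + (p.s (i + 1) - p.s i) • p.slope i = p.x (i + 1) := by
  rw [slope, smul_smul, mul_inv_cancel₀ (sub_ne_zero.2 (p.mono i hi).ne'), one_smul,
    add_sub_cancel]

lemma seg_eq {i : ℕ} {t : ℝ} (hi : i < p.k) (hit : p.s i ≤ t)
    (hmax : ∀ j < p.k, p.s j ≤ t → j ≤ i) : p.seg t = i :=
  IsGreatest.csSup_eq ⟨⟨hi, hit⟩, fun j hj => hmax j hj.1 hj.2⟩

lemma path_eq_of_seg_eq {i : ℕ} {t : ℝ} (h : p.seg t = i) :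
    p.path t = p.x i + (t - p.s i) • p.slope i := by
  rw [path, h, slope, smul_smul, div_eq_mul_inv]

lemma path_eq_of_mem_Icc {i : ℕ} {r : ℝ} (hi : i < p.k) (hr : r ∈ Icc (p.s i) (p.s (i + 1))) :
    p.path r = p.x i + (r - p.s i) • p.slope i := by
  -- `seg` jumps to `i + 1` at the right endpoint, unless `i + 1` is the last index.
  by_cases hnext : i + 1 < p.k ∧ r = p.s (i + 1)
  · obtain ⟨hi', rfl⟩ := hnext
    rw [path_eq_of_seg_eq (seg_eq hi' le_rfl fun j hj hjr => ?_), sub_self, zero_smul, add_zero,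
      x_add_slope hi]
    by_contra! hij
    exact hjr.not_gt (p.s_strictMonoOn (mem_Iic.2 hi'.le) (mem_Iic.2 hj.le) hij)
  · refine path_eq_of_seg_eq (seg_eq hi hr.1 fun j hj hjr => ?_)
    by_contra! hij
    have hle := p.s_strictMonoOn.monotoneOn (mem_Iic.2 hi) (mem_Iic.2 hj.le) hij
    exact hnext ⟨by omega, le_antisymm hr.2 (hle.trans hjr)⟩

lemma path_eq_add_smul_slope {i : ℕ} {r u : ℝ} (hi : i < p.k)
    (hr : r ∈ Icc (p.s i) (p.s (i + 1))) (hu : u ∈ Icc (p.s i) (p.s (i + 1))) :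
    p.path r = p.path u + (r - u) • p.slope i := by
  rw [path_eq_of_mem_Icc hi hr, path_eq_of_mem_Icc hi hu, add_assoc, ← add_smul,
    sub_add_sub_cancel']

lemma exists_Ico_segment {u : ℝ} (h0 : p.s 0 ≤ u) (hk : u < p.s p.k) :
    ∃ i < p.k, p.s i ≤ u ∧ u < p.s (i + 1) := by
  suffices ∀ n ≤ p.k, u < p.s n → ∃ i < n, p.s i ≤ u ∧ u < p.s (i + 1) from
    this p.k le_rfl hk
  intro n
  induction n with
  | zero => exact fun _ h => absurd h (not_lt.2 h0)
  | succ n ih =>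
    intro hn hu
    by_cases h : u < p.s n
    · obtain ⟨i, hi, hi'⟩ := ih (by omega) h
      exact ⟨i, by omega, hi'⟩
    · exact ⟨n, by omega, not_lt.1 h, hu⟩

lemma exists_Ioc_segment {u : ℝ} (h0 : p.s 0 < u) (hk : u ≤ p.s p.k) :
    ∃ i < p.k, p.s i < u ∧ u ≤ p.s (i + 1) := by
  suffices ∀ n ≤ p.k, u ≤ p.s n → ∃ i < n, p.s i < u ∧ u ≤ p.s (i + 1) from
    this p.k le_rfl hk
  intro n
  induction n with
  | zero => exact fun _ h => absurd h (not_le.2 h0)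
  | succ n ih =>
    intro hn hu
    by_cases h : u ≤ p.s n
    · obtain ⟨i, hi, hi'⟩ := ih (by omega) h
      exact ⟨i, by omega, hi'⟩
    · exact ⟨n, by omega, not_le.1 h, hu⟩

variable {s δ : ℝ} {x : Plane}

lemma le_dist_of_mem_V (hV : ∀ v ∈ p.V, v ∈ ball x δ → v = x) {j : ℕ} (hj : j ≤ p.k)
    (hne : p.x j ≠ x) : δ ≤ dist (p.x j) x :=
  not_lt.1 fun h => hne (hV _ ⟨j, hj, rfl⟩ (mem_ball.2 h))

lemma exists_ray_right (hx : p.path s = x) (h0 : p.s 0 ≤ s) (hk : s < p.s p.k)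
    (hV : ∀ v ∈ p.V, v ∈ ball x δ → v = x) :
    ∃ e w, w ≠ 0 ∧ δ ≤ (e - s) * ‖w‖ ∧ ∀ r ∈ Icc s e, p.path r = x + (r - s) • w := by
  obtain ⟨i, hi, his, hsi⟩ := p.exists_Ico_segment h0 hk
  have hray : ∀ r ∈ Icc s (p.s (i + 1)), p.path r = x + (r - s) • p.slope i := fun r hr =>
    hx ▸ path_eq_add_smul_slope hi ⟨his.trans hr.1, hr.2⟩ ⟨his, hsi.le⟩
  have hvertex : p.x (i + 1) = x + (p.s (i + 1) - s) • p.slope i := by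
    rw [← hray _ ⟨hsi.le, le_rfl⟩, path_eq_of_mem_Icc hi ⟨(p.mono i hi).le, le_rfl⟩,
      x_add_slope hi]
  have hne : p.x (i + 1) ≠ x := by
    simpa [hvertex] using ⟨(sub_pos.2 hsi).ne', slope_ne_zero hi⟩
  refine ⟨p.s (i + 1), p.slope i, slope_ne_zero hi, ?_, hray⟩
  simpa [hvertex, dist_eq_norm, norm_smul, abs_of_pos (sub_pos.2 hsi)] using
    le_dist_of_mem_V hV hi hne

lemma exists_ray_left (hx : p.path s = x) (h0 : p.s 0 < s) (hk : s ≤ p.s p.k)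
    (hV : ∀ v ∈ p.V, v ∈ ball x δ → v = x) :
    ∃ e w, w ≠ 0 ∧ δ ≤ (s - e) * ‖w‖ ∧ ∀ r ∈ Icc e s, p.path r = x + (s - r) • w := by
  obtain ⟨i, hi, his, hsi⟩ := p.exists_Ioc_segment h0 hk
  have hray : ∀ r ∈ Icc (p.s i) s, p.path r = x + (s - r) • -p.slope i := fun r hr => by
    rw [path_eq_add_smul_slope hi ⟨hr.1, hr.2.trans hsi⟩ ⟨his.le, hsi⟩, hx, smul_neg,
      ← neg_smul, neg_sub]
  have hvertex : p.x i = x + (s - p.s i) • -p.slope i := by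
    rw [← hray _ ⟨le_rfl, his.le⟩, path_eq_of_mem_Icc hi ⟨le_rfl, (p.mono i hi).le⟩, sub_self,
      zero_smul, add_zero]
  have hne : p.x i ≠ x := by
    simpa [hvertex] using ⟨(sub_pos.2 his).ne', slope_ne_zero hi⟩
  refine ⟨p.s i, -p.slope i, neg_ne_zero.2 (slope_ne_zero hi), ?_, hray⟩
  simpa [hvertex, dist_eq_norm, norm_smul, abs_of_pos (sub_pos.2 his)] using
    le_dist_of_mem_V hV hi.le hne

lemma exists_path_exitParam_eq (hx : p.path s = x) (h0 : p.s 0 ≤ s) (hk : s < p.s p.k)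
    (hV : ∀ v ∈ p.V, v ∈ ball x δ → v = x) :
    ∃ u : Plane, ∀ ρ, 0 < ρ → ρ ≤ δ → p.path (exitParam p s ρ x) = x + ρ • u := by
  obtain ⟨e, w, hw, hδe, hray⟩ := exists_ray_right hx h0 hk hV
  have hw' : 0 < ‖w‖ := norm_pos_iff.2 hw
  refine ⟨‖w‖⁻¹ • w, fun ρ hρ hρδ => ?_⟩
  have hτ : ρ / ‖w‖ ≤ e - s := (div_le_iff₀ hw').2 (hρδ.trans hδe)
  rw [exitParam, sSup_image_Icc_subset_ball_of_ray hρ hw (hρδ.trans hδe) hray,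
    hray _ ⟨by linarith [div_pos hρ hw'], by linarith⟩, add_sub_cancel_left, smul_smul,
    div_eq_mul_inv]

lemma exists_path_entryParam_eq (hx : p.path s = x) (h0 : p.s 0 < s) (hk : s ≤ p.s p.k)
    (hV : ∀ v ∈ p.V, v ∈ ball x δ → v = x) :
    ∃ u : Plane, ∀ ρ, 0 < ρ → ρ ≤ δ → p.path (entryParam p s ρ x) = x + ρ • u := by
  obtain ⟨e, w, hw, hδe, hray⟩ := exists_ray_left hx h0 hk hV
  have hw' : 0 < ‖w‖ := norm_pos_iff.2 hw
  refine ⟨‖w‖⁻¹ • w, fun ρ hρ hρδ => ?_⟩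
  have hτ : ρ / ‖w‖ ≤ s - e := (div_le_iff₀ hw').2 (hρδ.trans hδe)
  rw [entryParam, sInf_image_Icc_subset_ball_of_ray hρ hw (hρδ.trans hδe) hray,
    hray _ ⟨by linarith, by linarith [div_pos hρ hw']⟩, sub_sub_cancel, smul_smul,
    div_eq_mul_inv]

end Track

lemma Alternates.map {x y a b c d : Plane} {δ ε : ℝ} (φ : Plane ≃ₜ Plane)
    (hφ : φ '' sphere x δ = sphere y ε) (h : Alternates x δ a b c d) :
    Alternates y ε (φ a) (φ b) (φ c) (φ d) := by
  obtain ⟨hc, hd, hne⟩ := h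
  have himage : φ '' (sphere x δ \ {a, b}) = sphere y ε \ {φ a, φ b} := by
    rw [image_sdiff φ.injective, hφ, image_pair]
  refine ⟨himage ▸ mem_image_of_mem φ hc, himage ▸ mem_image_of_mem φ hd, fun heq => hne ?_⟩
  rw [← himage, ← φ.image_connectedComponentIn hc, ← φ.image_connectedComponentIn hd] at heq
  exact image_injective.2 φ.injective heq

lemma Alternates.rescale {x a b c d : Plane} {δ δ' : ℝ} (hδ : 0 < δ) (hδ' : 0 < δ')
    (h : Alternates x δ (x + δ • a) (x + δ • b) (x + δ • c) (x + δ • d)) :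
    Alternates x δ' (x + δ' • a) (x + δ' • b) (x + δ' • c) (x + δ' • d) := by
  have hr : 0 < δ' / δ := div_pos hδ' hδ
  let φ : Plane ≃ₜ Plane :=
    (AffineEquiv.homothetyUnitsMulHom x (Units.mk0 _ hr.ne')).toContinuousAffineEquiv.toHomeomorph
  have hφ : ∀ z, φ z = AffineMap.homothety x (δ' / δ) z := fun _ => rfl
  have hray : ∀ u : Plane, φ (x + δ • u) = x + δ' • u := fun u => by
    rw [hφ, AffineMap.homothety_apply, vsub_eq_sub, vadd_eq_add, add_sub_cancel_left, smul_smul,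
      div_mul_cancel₀ _ hδ.ne', add_comm]
  have hsphere : φ ⁻¹' sphere x δ' = sphere x δ := by
    ext z
    rw [mem_preimage, mem_sphere, mem_sphere, hφ, dist_homothety_center,
      Real.norm_of_nonneg hr.le, dist_comm, div_mul_eq_mul_div, div_eq_iff hδ.ne',
      mul_right_inj' hδ'.ne']
  simpa only [hray] using h.map φ (by rw [← hsphere, φ.image_preimage])

theorem crossing_indep_of_radius_general (p q : Track)
    (s t : ℝ) (hint : IsInter p q s t) (δ δ' : ℝ)
    (hδ : Admissible p q (p.path s) δ)
    (hδ'pos : 0 < δ') (hlt : δ' < δ)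
    (hcross : CrossAt p q s t δ) :
    CrossAt p q s t δ' := by
  obtain ⟨hps0, hpsk, hqt0, hqtk, hpq⟩ := hint
  have hVp : ∀ v ∈ p.V, v ∈ ball (p.path s) δ → v = p.path s := fun v hv => hδ.2 v (.inl hv)
  have hVq : ∀ v ∈ q.V, v ∈ ball (p.path s) δ → v = p.path s := fun v hv => hδ.2 v (.inr hv)
  obtain ⟨a, ha⟩ := Track.exists_path_entryParam_eq rfl hps0 hpsk.le hVp
  obtain ⟨b, hb⟩ := Track.exists_path_exitParam_eq rfl hps0.le hpsk hVp
  obtain ⟨c, hc⟩ := Track.exists_path_entryParam_eq hpq.symm hqt0 hqtk.le hVq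
  obtain ⟨d, hd⟩ := Track.exists_path_exitParam_eq hpq.symm hqt0.le hqtk hVq
  unfold CrossAt at hcross ⊢
  rw [ha δ hδ.1 le_rfl, hb δ hδ.1 le_rfl, hc δ hδ.1 le_rfl, hd δ hδ.1 le_rfl] at hcross
  rw [ha δ' hδ'pos hlt.le, hb δ' hδ'pos hlt.le, hc δ' hδ'pos hlt.le, hd δ' hδ'pos hlt.le]
  exact hcross.rescale hδ.1 hδ'pos

theorem crossing_indep_of_radius (p q : Track) (hseg : NoCommonSegment p q)
    (s t : ℝ) (hint : IsInter p q s t) (δ δ' : ℝ)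
    (hδ : Admissible p q (p.path s) δ)
    (hδ'pos : 0 < δ') (hlt : δ' < δ) (hδ' : Admissible p q (p.path s) δ')
    (hcross : CrossAt p q s t δ) :
    CrossAt p q s t δ' :=
  crossing_indep_of_radius_general p q s t hint δ δ' hδ hδ'pos hlt hcross
end
end

section
/- Let p and q be tracks. If 𝒱(p) ∩ 𝓛(q) = ∅ or 𝒱(q) ∩ 𝓛(p) = ∅, then range(h_p) and range(h_q) have no common straight line segment. -/
noncomputable section

/-!
Every point of the range of a track lies on one of its finitely many edges, so an infinite set
such as a nondegenerate segment, if it lies in both ranges, meets some edge of `p` and some edge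
of `q` in two distinct points. Those two edges then span the same line, which puts a vertex of `p`
on a line of `q` and a vertex of `q` on a line of `p`.
-/

lemma line_eq_of_two_common_points {x y x' y' z w : Plane} (hzw : z ≠ w)
    (hz : z ∈ line x y) (hw : w ∈ line x y) (hz' : z ∈ line x' y') (hw' : w ∈ line x' y') :
    line x y = line x' y' := by
  unfold line
  rw [← affineSpan_pair_eq_of_mem_of_mem_of_ne hz hw hzw,
    ← affineSpan_pair_eq_of_mem_of_mem_of_ne hz' hw' hzw]

namespace Track

def edge (p : Track) (i : ℕ) : Set Plane := segment ℝ (p.x i) (p.x (i + 1))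

lemma edge_subset_line (p : Track) (i : ℕ) : p.edge i ⊆ line (p.x i) (p.x (i + 1)) := by
  rw [edge, line, ← convexHull_pair]
  exact convexHull_subset_affineSpan _

lemma k_pos_of_rangeSet_nontrivial (p : Track) (h : p.rangeSet.Nontrivial) : 0 < p.k := by
  refine Nat.pos_of_ne_zero fun hk => h.not_subsingleton ?_
  rw [rangeSet, hk, Set.Icc_self, Set.image_singleton]
  exact Set.subsingleton_singleton

section Seg

variable (p : Track) {t : ℝ}

lemma seg_lt_and_s_seg_le (hk : 0 < p.k) (ht : p.s 0 ≤ t) :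
    p.seg t < p.k ∧ p.s (p.seg t) ≤ t :=
  Nat.sSup_mem (s := {i | i < p.k ∧ p.s i ≤ t}) ⟨0, hk, ht⟩ ⟨p.k, fun _ hi => hi.1.le⟩

lemma le_s_seg_succ (hk : 0 < p.k) (ht : t ∈ Set.Icc (p.s 0) (p.s p.k)) :
    t ≤ p.s (p.seg t + 1) := by
  obtain ⟨hlt, -⟩ := p.seg_lt_and_s_seg_le hk ht.1
  rcases (Nat.add_one_le_of_lt hlt).eq_or_lt with hk' | hlt'
  · rw [hk']
    exact ht.2
  · by_contra! hs
    have : p.seg t + 1 ≤ p.seg t := le_csSup ⟨p.k, fun _ hi => hi.1.le⟩ ⟨hlt', hs.le⟩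
    omega

lemma path_mem_edge (hk : 0 < p.k) (ht : t ∈ Set.Icc (p.s 0) (p.s p.k)) :
    p.path t ∈ p.edge (p.seg t) := by
  obtain ⟨hlt, hle⟩ := p.seg_lt_and_s_seg_le hk ht.1
  have hge := p.le_s_seg_succ hk ht
  have hmono := p.mono _ hlt
  rw [edge, segment_eq_image']
  exact ⟨_, ⟨div_nonneg (by linarith) (by linarith),
    div_le_one_of_le₀ (by linarith) (by linarith)⟩, rfl⟩

lemma rangeSet_subset_iUnion_edge (hk : 0 < p.k) : p.rangeSet ⊆ ⋃ i < p.k, p.edge i := by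
  rintro _ ⟨t, ht, rfl⟩
  exact Set.mem_biUnion (p.seg_lt_and_s_seg_le hk ht.1).1 (p.path_mem_edge hk ht)

end Seg

end Track

lemma exists_edge_inter_nontrivial {p q : Track} {S : Set Plane} (hS : S.Infinite)
    (hSp : S ⊆ p.rangeSet) (hSq : S ⊆ q.rangeSet) :
    ∃ i < p.k, ∃ j < q.k, (p.edge i ∩ q.edge j).Nontrivial := by
  have hp := p.rangeSet_subset_iUnion_edge <|
    p.k_pos_of_rangeSet_nontrivial (hS.nontrivial.mono hSp)
  have hq := q.rangeSet_subset_iUnion_edge <|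
    q.k_pos_of_rangeSet_nontrivial (hS.nontrivial.mono hSq)
  have hcover : S ⊆ ⋃ i < p.k, ⋃ j < q.k, p.edge i ∩ q.edge j := by
    intro z hz
    obtain ⟨i, hi, hzi⟩ := Set.mem_iUnion₂.1 (hp (hSp hz))
    obtain ⟨j, hj, hzj⟩ := Set.mem_iUnion₂.1 (hq (hSq hz))
    exact Set.mem_biUnion hi (Set.mem_biUnion hj ⟨hzi, hzj⟩)
  by_contra! hsub
  refine hS (Set.Finite.subset ?_ hcover)
  exact (Set.finite_lt_nat _).biUnion fun i hi => (Set.finite_lt_nat _).biUnion fun j hj =>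
    (hsub i hi j hj).finite

theorem no_common_segment_of_separation (p q : Track)
    (h : p.V ∩ q.L = ∅ ∨ q.V ∩ p.L = ∅) :
    NoCommonSegment p q := by
  rintro ⟨_, ⟨a, b, hab, rfl⟩, hSp, hSq⟩
  have hinf : (segment ℝ a b).Infinite :=
    (convex_segment a b).isPreconnected.infinite_of_nontrivial
      ⟨a, left_mem_segment ℝ a b, b, right_mem_segment ℝ a b, hab⟩
  obtain ⟨i, hi, j, hj, z, ⟨hzp, hzq⟩, w, ⟨hwp, hwq⟩, hzw⟩ :=
    exists_edge_inter_nontrivial hinf hSp hSq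
  have hline : line (p.x i) (p.x (i + 1)) = line (q.x j) (q.x (j + 1)) :=
    line_eq_of_two_common_points hzw (p.edge_subset_line i hzp) (p.edge_subset_line i hwp)
      (q.edge_subset_line j hzq) (q.edge_subset_line j hwq)
  rcases h with h | h
  · refine h.subset ⟨⟨i, hi.le, rfl⟩, j, hj, ?_⟩
    exact hline ▸ left_mem_affineSpan_pair ℝ _ _
  · refine h.subset ⟨⟨j, hj.le, rfl⟩, i, hi, ?_⟩
    exact hline ▸ left_mem_affineSpan_pair ℝ _ _

end
end

section
/- Let p and q be tracks such that range(h_p) and range(h_q) have no common straight line segment. Then the set of intersections of p and q is finite; in particular the number CN(p,q) of crossings of p and q is a well-defined natural number. -/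
noncomputable section

/-! On each pair of edges, `h_p` and `h_q` are injective affine maps of the parameter. Two distinct
intersections on the same pair of edges would make the two edges share the nondegenerate segment
between them, so each of the finitely many pairs of edges carries at most one intersection. -/

def Track.segMap (p : Track) (i : ℕ) : ℝ →ᵃ[ℝ] Plane :=
  (AffineMap.lineMap (p.x i) (p.x (i + 1))).comp
    ((p.s (i + 1) - p.s i)⁻¹ • (AffineMap.id ℝ ℝ - AffineMap.const ℝ ℝ (p.s i)))

def edgeIntersections (p q : Track) (i j : ℕ) : Set (ℝ × ℝ) :=
  {st | st.1 ∈ Set.Ico (p.s i) (p.s (i + 1)) ∧ st.2 ∈ Set.Ico (q.s j) (q.s (j + 1)) ∧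
    p.segMap i st.1 = q.segMap j st.2}

theorem AffineMap.subsingleton_setOf_apply_eq {𝕜 E : Type*} [Field 𝕜] [LinearOrder 𝕜]
    [IsStrictOrderedRing 𝕜] [AddCommGroup E] [Module 𝕜 E] {f g : 𝕜 →ᵃ[𝕜] E}
    (hf : Function.Injective f) (hg : Function.Injective g) {I J : Set 𝕜}
    (hI : Convex 𝕜 I) (hJ : Convex 𝕜 J)
    (hseg : ∀ a b, segment 𝕜 a b ⊆ f '' I → segment 𝕜 a b ⊆ g '' J → a = b) :
    {st : 𝕜 × 𝕜 | st.1 ∈ I ∧ st.2 ∈ J ∧ f st.1 = g st.2}.Subsingleton := by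
  rintro ⟨s, t⟩ ⟨hs, ht, hst⟩ ⟨s', t'⟩ ⟨hs', ht', hst'⟩
  have hss' : s = s' := by
    refine hf (hseg _ _ ?_ ?_)
    · rw [← image_segment]
      exact Set.image_mono (hI.segment_subset hs hs')
    · rw [hst, hst', ← image_segment]
      exact Set.image_mono (hJ.segment_subset ht ht')
  subst hss'
  exact Prod.ext rfl (hg (hst.symm.trans hst'))

namespace Track

variable (p : Track)

theorem s_strictMonoOn_s6 : StrictMonoOn p.s (Set.Iic p.k) :=
  strictMonoOn_Iic_of_lt_succ p.mono

theorem seg_eq_of_mem_Ico {i : ℕ} {u : ℝ} (hi : i < p.k) (hu : u ∈ Set.Ico (p.s i) (p.s (i + 1))) :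
    p.seg u = i := by
  refine IsGreatest.csSup_eq ⟨⟨hi, hu.1⟩, fun j hj => ?_⟩
  by_contra! hij
  have := p.s_strictMonoOn_s6.monotoneOn (Set.mem_Iic.2 hi) (Set.mem_Iic.2 hj.1.le) hij
  linarith [hj.2, hu.2]

theorem path_eq_segMap {i : ℕ} {u : ℝ} (hi : i < p.k) (hu : u ∈ Set.Ico (p.s i) (p.s (i + 1))) :
    p.path u = p.segMap i u := by
  simp [path, segMap, p.seg_eq_of_mem_Ico hi hu, AffineMap.lineMap_apply_module', div_eq_inv_mul,
    add_comm]

theorem segMap_injective {i : ℕ} (hi : i < p.k) : Function.Injective (p.segMap i) := by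
  have hd : p.s (i + 1) - p.s i ≠ 0 := (sub_pos.2 (p.mono i hi)).ne'
  intro u v huv
  simpa [hd] using AffineMap.lineMap_injective ℝ (p.ne i hi) huv

theorem segMap_image_subset_rangeSet {i : ℕ} (hi : i < p.k) :
    p.segMap i '' Set.Ico (p.s i) (p.s (i + 1)) ⊆ p.rangeSet := by
  rintro _ ⟨u, hu, rfl⟩
  have hmono := p.s_strictMonoOn_s6.monotoneOn
  exact ⟨u, ⟨(hmono (Nat.zero_le _) hi.le (Nat.zero_le i)).trans hu.1,
    hu.2.le.trans (hmono hi (le_refl p.k) hi)⟩, p.path_eq_segMap hi hu⟩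

end Track

theorem setOf_isInter_subset_biUnion_edgeIntersections (p q : Track) :
    {st : ℝ × ℝ | IsInter p q st.1 st.2} ⊆
      ⋃ i ∈ Finset.range p.k, ⋃ j ∈ Finset.range q.k, edgeIntersections p q i j := by
  rintro ⟨s, t⟩ ⟨hs0, hsk, ht0, htk, hst⟩
  have hs := Ico_subset_biUnion_Ico p.k p.s ⟨hs0.le, hsk⟩
  have ht := Ico_subset_biUnion_Ico q.k q.s ⟨ht0.le, htk⟩
  simp only [Set.mem_iUnion, Finset.mem_range] at hs ht ⊢
  obtain ⟨i, hi, hsi⟩ := hs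
  obtain ⟨j, hj, htj⟩ := ht
  refine ⟨i, hi, j, hj, hsi, htj, ?_⟩
  rw [← p.path_eq_segMap hi hsi, ← q.path_eq_segMap hj htj]
  exact hst

theorem NoCommonSegment.subsingleton_edgeIntersections {p q : Track} (h : NoCommonSegment p q)
    {i j : ℕ} (hi : i < p.k) (hj : j < q.k) : (edgeIntersections p q i j).Subsingleton := by
  refine AffineMap.subsingleton_setOf_apply_eq (p.segMap_injective hi) (q.segMap_injective hj)
    (convex_Ico _ _) (convex_Ico _ _) fun a b hap hbq => ?_
  by_contra hab
  exact h ⟨segment ℝ a b, ⟨a, b, hab, rfl⟩, hap.trans (p.segMap_image_subset_rangeSet hi),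
    hbq.trans (q.segMap_image_subset_rangeSet hj)⟩

theorem intersections_finite (p q : Track) (h : NoCommonSegment p q) :
    {st : ℝ × ℝ | IsInter p q st.1 st.2}.Finite ∧
    {st : ℝ × ℝ | IsCrossing p q st.1 st.2}.Finite := by
  have hinter : {st : ℝ × ℝ | IsInter p q st.1 st.2}.Finite := by
    refine Set.Finite.subset ?_ (setOf_isInter_subset_biUnion_edgeIntersections p q)
    refine (Finset.range p.k).finite_toSet.biUnion fun i hi => ?_
    refine (Finset.range q.k).finite_toSet.biUnion fun j hj => ?_
    exact (h.subsingleton_edgeIntersections (Finset.mem_range.1 hi)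
      (Finset.mem_range.1 hj)).finite
  exact ⟨hinter, hinter.subset fun _ hst => hst.1⟩

end
end

section
/- Let p = ((s₀,x₀),(s₁,x₁),…,(s_k,x_k)) be a track and let q and q' be tracks. Then for every δ > 0 there exists a track p̄ = ((s₀,y₀),(s₁,y₁),…,(s_k,y_k)) (with the same parameter values sᵢ) such that p̄ ⋈ q, p̄ ⋈ q' and ‖xᵢ − yᵢ‖ < δ for all 0 ≤ i ≤ k. -/
noncomputable section

/-!
The new vertices are chosen one after another. Lines through two points, and countable unions of
them, are Lebesgue-null in the plane, so every ball contains a point `w` off the lines of `q` and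
`q'`, off their vertices, and off every line joining the previously chosen vertex `z` to a vertex
of `q` or `q'`. Since `z` is itself not a vertex of `q` or `q'`, no such vertex then lies on
`line z w`.
-/

open MeasureTheory Module

theorem addHaar_affineSpan_pair {E : Type*} [NormedAddCommGroup E] [NormedSpace ℝ E]
    [MeasurableSpace E] [BorelSpace E] [FiniteDimensional ℝ E] (μ : Measure E)
    [μ.IsAddHaarMeasure] (hE : 1 < finrank ℝ E) (x y : E) : μ line[ℝ, x, y] = 0 := by
  refine Measure.addHaar_affineSubspace μ _ fun h => ?_
  have h1 := (collinear_pair ℝ x y).finrank_le_one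
  rw [← direction_affineSpan, h, AffineSubspace.direction_top, finrank_top] at h1
  omega

theorem volume_line (x y : Plane) : volume (line x y) = 0 :=
  addHaar_affineSpan_pair volume (by simp) x y

theorem mem_line_of_mem_line_of_ne {z v w : Plane} (hv : v ∈ line z w) (hvz : v ≠ z) :
    w ∈ line z v := by
  rw [line, affineSpan_pair_eq_of_right_mem_of_ne hv hvz]
  exact right_mem_affineSpan_pair ℝ z w

namespace Track

theorem countable_V (q : Track) : q.V.Countable :=
  (Set.countable_range q.x).mono <| by rintro _ ⟨i, -, rfl⟩; exact ⟨i, rfl⟩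

theorem volume_L (q : Track) : volume q.L = 0 :=
  measure_mono_null (fun _ ⟨i, _, hi⟩ => Set.mem_iUnion.2 ⟨i, hi⟩)
    (measure_iUnion_null fun i => volume_line (q.x i) (q.x (i + 1)))

/-- The points that may not follow `z` as the next vertex of a track weakly separated from `q`. -/
def forbidden (q : Track) (z : Plane) : Set Plane :=
  q.L ∪ q.V ∪ ⋃ v ∈ q.V, line z v

theorem volume_forbidden (q : Track) (z : Plane) : volume (q.forbidden z) = 0 := by
  refine measure_union_null (measure_union_null q.volume_L (q.countable_V.measure_zero _)) ?_
  exact (measure_biUnion_null_iff q.countable_V).2 fun v _ => volume_line z v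

theorem notMem_line_of_notMem_forbidden {q : Track} {z w v : Plane} (hz : z ∉ q.V)
    (hw : w ∉ q.forbidden z) (hv : v ∈ q.V) : v ∉ line z w := fun hvw =>
  hw <| Or.inr <| Set.mem_biUnion hv <| mem_line_of_mem_line_of_ne hvw fun h => hz (h ▸ hv)

theorem wSep_of_notMem_forbidden {p q : Track} {z : Plane} (h0 : p.x 0 ∉ q.forbidden z)
    (hsucc : ∀ i < p.k, p.x (i + 1) ∉ q.forbidden (p.x i)) : WSep p q := by
  have hvert : ∀ i ≤ p.k, p.x i ∉ q.L ∪ q.V := by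
    rintro (_ | i) hi h
    · exact h0 (Or.inl h)
    · exact hsucc i (by omega) (Or.inl h)
  refine ⟨Set.eq_empty_of_forall_notMem ?_, Set.eq_empty_of_forall_notMem ?_⟩
  · rintro _ ⟨⟨i, hi, rfl⟩, hL⟩
    exact hvert i hi (Or.inl hL)
  · rintro v ⟨hv, i, hi, hvi⟩
    exact notMem_line_of_notMem_forbidden (fun h => hvert i hi.le (Or.inr h)) (hsucc i hi) hv hvi

end Track

theorem exists_mem_ball_notMem_forbidden (q q' : Track) (z c : Plane) {δ : ℝ} (hδ : 0 < δ) :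
    ∃ w ∈ Metric.ball c δ, w ∉ q.forbidden z ∧ w ∉ q'.forbidden z ∧ w ≠ z := by
  have hnull : volume (q.forbidden z ∪ q'.forbidden z ∪ {z}) = 0 :=
    measure_union_null (measure_union_null (q.volume_forbidden z) (q'.volume_forbidden z))
      (measure_singleton z)
  obtain ⟨w, hw, hwS⟩ :
      (Metric.ball c δ \ (q.forbidden z ∪ q'.forbidden z ∪ {z})).Nonempty := by
    refine nonempty_of_measure_ne_zero (μ := volume) ?_
    rw [measure_sdiff_null hnull]
    exact (Metric.measure_ball_pos volume c hδ).ne'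
  simp only [Set.mem_union, Set.mem_singleton_iff, not_or] at hwS
  exact ⟨w, hw, hwS.1.1, hwS.1.2, hwS.2⟩

theorem weakly_separated_perturbation (p q q' : Track) (δ : ℝ) (hδ : 0 < δ) :
    ∃ pbar : Track, pbar.k = p.k ∧ (∀ i ≤ p.k, pbar.s i = p.s i) ∧
      WSep pbar q ∧ WSep pbar q' ∧ ∀ i ≤ p.k, ‖p.x i - pbar.x i‖ < δ := by
  choose next hball hq hq' hne using
    fun z c => exists_mem_ball_notMem_forbidden q q' z c hδ
  let y : ℕ → Plane := fun n => n.rec (next (p.x 0) (p.x 0)) fun n yn => next yn (p.x (n + 1))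
  have hy : ∀ n, y n ∈ Metric.ball (p.x n) δ := by
    rintro (_ | n)
    exacts [hball _ _, hball _ _]
  refine ⟨⟨p.k, p.s, y, p.mono, fun _ _ => (hne _ _).symm⟩, rfl, fun _ _ => rfl,
    Track.wSep_of_notMem_forbidden (hq _ _) fun _ _ => hq _ _,
    Track.wSep_of_notMem_forbidden (hq' _ _) fun _ _ => hq' _ _, fun i _ => ?_⟩
  rw [← dist_eq_norm, dist_comm]
  exact hy i

end
end

section
/- Let φ, ψ : [0;1] → [0;1]² be continuous paths with φ(0) = (0,0), φ(1) = (1,1), ψ(0) = (0,1), ψ(1) = (1,0), let f, g : [−1;2] → ℝ² be their trivial extensions, and fix a common modulus of uniform continuity md of f and g. Then there exist 5-approximations p = ((s₀,x₀),…,(s_k,x_k)) of f (on [−1;2]) and q = ((t₀,y₀),…,(t_l,y_l)) of g (on [−1;2]) such that all vertices x₀,…,x_k of p are pairwise distinct, all vertices y₀,…,y_l of q are pairwise distinct, 𝒱(p) ∩ 𝓛̄(q) = ∅ and 𝒱(q) ∩ 𝓛̄(p) = ∅. -/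
noncomputable section

/-!
Take a uniform grid `s₀ < ⋯ < s_K` on `[-1, 2]` of mesh below `2 ^ (-md 5)` and perturb the
`2K + 2` values `f sᵢ`, `g sᵢ` by less than `2⁻⁵` to points in general position: choose them one
at a time, each off the finitely many lines through the earlier ones, which are nowhere dense in
the plane. Then the vertices of each track are pairwise distinct, and no vertex of one track lies on
a line through two vertices of the other.
-/

open Module

section NowhereDenseLines

variable {E : Type*} [NormedAddCommGroup E] [NormedSpace ℝ E] [FiniteDimensional ℝ E]

theorem isNowhereDense_affineSpan_pair (hE : 2 ≤ finrank ℝ E) (a b : E) :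
    IsNowhereDense (line[ℝ, a, b] : Set E) := by
  rw [(AffineSubspace.closed_of_finiteDimensional _).isNowhereDense_iff,
    ← Set.not_nonempty_iff_eq_empty,
    (AffineSubspace.convex _).interior_nonempty_iff_affineSpan_eq_top,
    AffineSubspace.affineSpan_coe]
  intro htop
  have hrank := collinear_iff_finrank_le_one.1 (collinear_pair ℝ a b)
  rw [← direction_affineSpan, htop, AffineSubspace.direction_top, finrank_top] at hrank
  omega

theorem exists_mem_ball_forall_notMem_affineSpan_pair (hE : 2 ≤ finrank ℝ E) (c : E) {ε : ℝ}
    (hε : 0 < ε) {s : Set E} (hs : s.Finite) :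
    ∃ x ∈ Metric.ball c ε, ∀ a ∈ s, ∀ b ∈ s, x ∉ line[ℝ, a, b] := by
  by_contra! hcover
  have hmeagre : IsMeagre (⋃ a ∈ s, ⋃ b ∈ s, (line[ℝ, a, b] : Set E)) :=
    isMeagre_biUnion hs.countable fun a _ ↦ isMeagre_biUnion hs.countable fun b _ ↦
      (isNowhereDense_affineSpan_pair hE a b).isMeagre
  refine not_isMeagre_of_isOpen (Metric.isOpen_ball (x := c)) (Metric.nonempty_ball.2 hε)
    (hmeagre.mono fun x hx ↦ ?_)
  obtain ⟨a, ha, b, hb, hxab⟩ := hcover x hx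
  exact Set.mem_biUnion ha (Set.mem_biUnion hb hxab)

end NowhereDenseLines

/-- Taking `i = j` shows that `v` is injective on `T`. -/
def InGeneralPositionOn (k : Type*) {V P ι : Type*} [Ring k] [AddCommGroup V] [Module k V]
    [AddTorsor V P] (v : ι → P) (T : Set ι) : Prop :=
  ∀ i ∈ T, ∀ j ∈ T, ∀ m ∈ T, m ≠ i → m ≠ j → v m ∉ line[k, v i, v j]

namespace InGeneralPositionOn

variable {k V P ι : Type*} [DivisionRing k] [AddCommGroup V] [Module k V] [AddTorsor V P]
  {v : ι → P} {T : Set ι}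

theorem injOn (hv : InGeneralPositionOn k v T) : Set.InjOn v T := by
  intro i hi m hm hvim
  by_contra hne
  exact hv i hi i hi m hm (Ne.symm hne) (Ne.symm hne) (hvim ▸ left_mem_affineSpan_pair k _ _)

theorem update [DecidableEq ι] (hv : InGeneralPositionOn k v T) {a : ι} (ha : a ∉ T) {x : P}
    (hx : ∀ i ∈ T, ∀ j ∈ T, x ∉ line[k, v i, v j]) :
    InGeneralPositionOn k (Function.update v a x) (insert a T) := by
  have hold : ∀ i ∈ T, Function.update v a x i = v i := fun i hi ↦
    Function.update_of_ne (ne_of_mem_of_not_mem hi ha) x v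
  -- an old point on a line through `x` would put `x` on a line through two old points
  have hline_x : ∀ m ∈ T, ∀ j ∈ insert a T, m ≠ j →
      v m ∉ line[k, x, Function.update v a x j] := by
    intro m hm j hj hmj hmem
    rcases Set.mem_insert_iff.1 hj with hja | hj
    · rw [hja, Function.update_self, Set.pair_eq_singleton,
        AffineSubspace.mem_affineSpan_singleton] at hmem
      exact hx m hm m hm (hmem ▸ left_mem_affineSpan_pair k _ _)
    · rw [hold j hj] at hmem
      have hvjm : v j ≠ v m := fun h ↦
        hv m hm m hm j hj hmj.symm hmj.symm (h ▸ left_mem_affineSpan_pair k _ _)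
      exact hx j hj m hm <|
        (collinear_insert_of_mem_affineSpan_pair hmem).mem_affineSpan_of_mem_of_ne
          (by simp) (by simp) (by simp) hvjm
  intro i hi j hj m hm hmi hmj
  rcases Set.mem_insert_iff.1 hm with hma | hm
  · subst hma
    have hiT := (Set.mem_insert_iff.1 hi).resolve_left hmi.symm
    have hjT := (Set.mem_insert_iff.1 hj).resolve_left hmj.symm
    rw [Function.update_self, hold i hiT, hold j hjT]
    exact hx i hiT j hjT
  rw [hold m hm]
  rcases Set.mem_insert_iff.1 hi with hia | hi
  · rw [hia, Function.update_self]
    exact hline_x m hm j hj hmj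
  rcases Set.mem_insert_iff.1 hj with hja | hj
  · rw [hja, Function.update_self, Set.pair_comm]
    exact hline_x m hm i (Set.mem_insert_of_mem _ hi) hmi
  rw [hold i hi, hold j hj]
  exact hv i hi j hj m hm hmi hmj

end InGeneralPositionOn

theorem exists_inGeneralPositionOn_dist_lt {E ι : Type*} [NormedAddCommGroup E] [NormedSpace ℝ E]
    [FiniteDimensional ℝ E] (hE : 2 ≤ finrank ℝ E) (c : ι → E) {ε : ℝ} (hε : 0 < ε)
    (T : Finset ι) :
    ∃ v : ι → E, (∀ i ∈ T, dist (v i) (c i) < ε) ∧ InGeneralPositionOn ℝ v T := by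
  classical
  induction T using Finset.induction_on with
  | empty => exact ⟨c, by simp, by simp [InGeneralPositionOn]⟩
  | @insert a T ha ih =>
    obtain ⟨v, hv_near, hv⟩ := ih
    obtain ⟨x, hx_near, hx⟩ :=
      exists_mem_ball_forall_notMem_affineSpan_pair hE (c a) hε (T.finite_toSet.image v)
    refine ⟨Function.update v a x, fun i hi ↦ ?_, ?_⟩
    · rcases Finset.mem_insert.1 hi with rfl | hi
      · simpa using hx_near
      · rw [Function.update_of_ne (ne_of_mem_of_not_mem hi ha)]
        exact hv_near i hi
    · rw [Finset.coe_insert]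
      exact hv.update ha fun i hi j hj ↦ hx _ (Set.mem_image_of_mem v hi) _
        (Set.mem_image_of_mem v hj)

theorem exists_uniform_grid {a b δ : ℝ} (hab : a < b) (hδ : 0 < δ) :
    ∃ (K : ℕ) (s : ℕ → ℝ), StrictMono s ∧ s 0 = a ∧ s K = b ∧ ∀ i, s (i + 1) - s i < δ := by
  obtain ⟨K, hK⟩ := exists_nat_gt ((b - a) / δ)
  have hK_pos : (0 : ℝ) < K := (div_pos (sub_pos.2 hab) hδ).trans hK
  refine ⟨K, fun i ↦ a + (b - a) / K * i, fun i j hij ↦ ?_, by simp, ?_, fun i ↦ ?_⟩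
  · have hstep : (0 : ℝ) < (b - a) / K := div_pos (sub_pos.2 hab) hK_pos
    dsimp only
    gcongr
  · field_simp
    ring
  · push_cast
    rw [mul_add_one, add_sub_add_left_eq_sub, add_sub_cancel_left, div_lt_iff₀ hK_pos]
    rwa [div_lt_iff₀ hδ, mul_comm] at hK

theorem Track.V_inter_Lbar_eq_empty {p q : Track}
    (h : ∀ i ≤ p.k, ∀ j ≤ q.k, ∀ j' ≤ q.k, p.x i ∉ line (q.x j) (q.x j')) :
    p.V ∩ q.Lbar = ∅ := by
  rw [Set.eq_empty_iff_forall_notMem]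
  rintro _ ⟨⟨i, hi, rfl⟩, j, hj, j', hj', -, hmem⟩
  exact h i hi j hj j' hj' hmem

theorem good_five_approximations_exist_general (φ ψ : ℝ → Plane)
    (md : ℕ → ℕ) :
    ∃ p q : Track,
      IsApprox (extF φ) md (-1) 2 5 p ∧ IsApprox (extG ψ) md (-1) 2 5 q ∧
      (∀ i ≤ p.k, ∀ j ≤ p.k, i ≠ j → p.x i ≠ p.x j) ∧
      (∀ i ≤ q.k, ∀ j ≤ q.k, i ≠ j → q.x i ≠ q.x j) ∧
      p.V ∩ q.Lbar = ∅ ∧ q.V ∩ p.Lbar = ∅ := by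
  obtain ⟨K, s, hs_mono, hs0, hsK, hs_mesh⟩ :=
    exists_uniform_grid (a := -1) (b := 2) (δ := 2 ^ (-(md 5 : ℤ))) (by norm_num) (by positivity)
  set T := (Finset.Iic K).disjSum (Finset.Iic K)
  obtain ⟨v, hv_near, hv⟩ := exists_inGeneralPositionOn_dist_lt (finrank_euclideanSpace_fin).ge
    (Sum.elim (extF φ ∘ s) (extG ψ ∘ s)) (ε := 2 ^ (-((5 : ℕ) : ℤ))) (by positivity) T
  have hinl : ∀ i ≤ K, Sum.inl i ∈ T := by simp [T]
  have hinr : ∀ i ≤ K, Sum.inr i ∈ T := by simp [T]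
  let p : Track := ⟨K, s, v ∘ Sum.inl, fun i _ ↦ hs_mono i.lt_succ_self,
    fun i hi h ↦ by simpa using hv.injOn (hinl i hi.le) (hinl (i + 1) hi) h⟩
  let q : Track := ⟨K, s, v ∘ Sum.inr, fun i _ ↦ hs_mono i.lt_succ_self,
    fun i hi h ↦ by simpa using hv.injOn (hinr i hi.le) (hinr (i + 1) hi) h⟩
  refine ⟨p, q, ⟨hs0, hsK, fun i _ ↦ hs_mesh i, fun i hi ↦ ?_⟩,
    ⟨hs0, hsK, fun i _ ↦ hs_mesh i, fun i hi ↦ ?_⟩, fun i hi j hj hij h ↦ ?_,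
    fun i hi j hj hij h ↦ ?_, Track.V_inter_Lbar_eq_empty fun i hi j hj j' hj' ↦ ?_,
    Track.V_inter_Lbar_eq_empty fun i hi j hj j' hj' ↦ ?_⟩
  · rw [← dist_eq_norm']
    exact hv_near _ (hinl i hi)
  · rw [← dist_eq_norm']
    exact hv_near _ (hinr i hi)
  · exact hij (by simpa using hv.injOn (hinl i hi) (hinl j hj) h)
  · exact hij (by simpa using hv.injOn (hinr i hi) (hinr j hj) h)
  · exact hv _ (hinr j hj) _ (hinr j' hj') _ (hinl i hi) Sum.inl_ne_inr Sum.inl_ne_inr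
  · exact hv _ (hinl j hj) _ (hinl j' hj') _ (hinr i hi) Sum.inr_ne_inl Sum.inr_ne_inl

theorem good_five_approximations_exist (φ ψ : ℝ → Plane)
    (hφc : ContinuousOn φ (Set.Icc 0 1)) (hψc : ContinuousOn ψ (Set.Icc 0 1))
    (hφm : ∀ t ∈ Set.Icc (0:ℝ) 1, φ t ∈ unitSquare)
    (hψm : ∀ t ∈ Set.Icc (0:ℝ) 1, ψ t ∈ unitSquare)
    (hφ0 : φ 0 = pt 0 0) (hφ1 : φ 1 = pt 1 1)
    (hψ0 : ψ 0 = pt 0 1) (hψ1 : ψ 1 = pt 1 0)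
    (md : ℕ → ℕ) (hmd : IsModulus2 (extF φ) (extG ψ) md) :
    ∃ p q : Track,
      IsApprox (extF φ) md (-1) 2 5 p ∧ IsApprox (extG ψ) md (-1) 2 5 q ∧
      (∀ i ≤ p.k, ∀ j ≤ p.k, i ≠ j → p.x i ≠ p.x j) ∧
      (∀ i ≤ q.k, ∀ j ≤ q.k, i ≠ j → q.x i ≠ q.x j) ∧
      p.V ∩ q.Lbar = ∅ ∧ q.V ∩ p.Lbar = ∅ :=
  good_five_approximations_exist_general φ ψ md

end
end

section
/- Let f, g : [−1;2] → ℝ² be continuous, and let I₀ ⊇ I₁ ⊇ I₂ ⊇ … and J₀ ⊇ J₁ ⊇ J₂ ⊇ … be nested sequences of nonempty closed intervals contained in [−1;2] such that for all m ≥ 1, f(I_m) ⊆ U(g(J_{m−1}), 2^{−(m−1)}) and g(J_m) ⊆ U(f(I_m), 2⁻ᵐ). Then f(⋂_m I_m) = g(⋂_m J_m). -/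
/-! A point of `f(⋂ I)` lies within `2^{-m}` of `g(J_m)` for every `m`; as the `J_m` decrease,
it lies in the closure of each `g(J_m)`, which is closed by compactness, and a point lying in
every `g(J_m)` lies in `g(⋂ J)` because its fibres in the `J_m` are nested nonempty compacta.
The reverse inclusion is symmetric. -/

noncomputable section

open Set Filter Topology Metric

/-- The fibres over a common point form a nested sequence of nonempty compact sets. -/
theorem iInter_image_subset_image_iInter_of_isCompact {X Y : Type*} [TopologicalSpace X]
    [T2Space X] [TopologicalSpace Y] [T1Space Y] {f : X → Y} {S : ℕ → Set X}
    (hS : Antitone S) (hSc : ∀ m, IsCompact (S m)) (hf : ContinuousOn f (S 0)) :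
    ⋂ m, f '' S m ⊆ f '' ⋂ m, S m := by
  intro y hy
  set K : ℕ → Set X := fun m => S m ∩ f ⁻¹' {y}
  have hK_closed (m : ℕ) : IsClosed (K m) :=
    (hf.mono (hS (Nat.zero_le m))).preimage_isClosed_of_isClosed (hSc m).isClosed
      isClosed_singleton
  have hK_nonempty (m : ℕ) : (K m).Nonempty := by
    obtain ⟨x, hx, rfl⟩ := mem_iInter.1 hy m
    exact ⟨x, hx, rfl⟩
  obtain ⟨x, hx⟩ := IsCompact.nonempty_iInter_of_sequence_nonempty_isCompact_isClosed K
    (fun m => inter_subset_inter_left _ (hS (Nat.le_succ m))) hK_nonempty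
    ((hSc 0).of_isClosed_subset (hK_closed 0) inter_subset_left) hK_closed
  exact ⟨x, mem_iInter.2 fun m => (mem_iInter.1 hx m).1, (mem_iInter.1 hx 0).2⟩

theorem subset_image_iInter_of_eventually_subset_thickening {X Y : Type*}
    [TopologicalSpace X] [T2Space X] [PseudoMetricSpace Y] [T1Space Y] {g : X → Y}
    {J : ℕ → Set X} (hJ : Antitone J) (hJc : ∀ m, IsCompact (J m))
    (hg : ContinuousOn g (J 0)) {ε : ℕ → ℝ} (hε : Tendsto ε atTop (𝓝 0)) {A : Set Y}
    (hA : ∀ᶠ k in atTop, A ⊆ thickening (ε k) (g '' J k)) :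
    A ⊆ g '' ⋂ m, J m := by
  refine fun y hy => iInter_image_subset_image_iInter_of_isCompact hJ hJc hg
    (mem_iInter.2 fun m => ?_)
  have hgJc : IsCompact (g '' J m) := (hJc m).image_of_continuousOn (hg.mono (hJ m.zero_le))
  refine hgJc.isClosed.closure_subset (Metric.mem_closure_iff.2 fun δ hδ => ?_)
  obtain ⟨k, hAk, hεk, hmk⟩ :=
    (hA.and ((hε.eventually (gt_mem_nhds hδ)).and (eventually_ge_atTop m))).exists
  obtain ⟨z, hz, hyz⟩ := mem_thickening_iff.1 (hAk hy)
  exact ⟨z, image_mono (hJ hmk) hz, hyz.trans hεk⟩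

theorem nbhdU_eq_thickening (A : Set Plane) (δ : ℝ) : nbhdU A δ = thickening δ A := by
  ext x
  simp only [nbhdU, mem_thickening_iff, dist_eq_norm]
  rfl

theorem tendsto_two_zpow_neg_atTop :
    Tendsto (fun k : ℕ => (2:ℝ) ^ (-(k : ℤ))) atTop (𝓝 0) := by
  simp only [zpow_neg, zpow_natCast]
  exact tendsto_inv_atTop_zero.comp (tendsto_pow_atTop_atTop_of_one_lt one_lt_two)

theorem images_of_nested_intersections_equal_general (f g : ℝ → Plane)
    (hf : ContinuousOn f (Set.Icc (-1:ℝ) 2)) (hg : ContinuousOn g (Set.Icc (-1:ℝ) 2))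
    (a b c d : ℕ → ℝ)
    (hIsub : ∀ m, Set.Icc (a m) (b m) ⊆ Set.Icc (-1:ℝ) 2)
    (hJsub : ∀ m, Set.Icc (c m) (d m) ⊆ Set.Icc (-1:ℝ) 2)
    (hInest : ∀ m, Set.Icc (a (m + 1)) (b (m + 1)) ⊆ Set.Icc (a m) (b m))
    (hJnest : ∀ m, Set.Icc (c (m + 1)) (d (m + 1)) ⊆ Set.Icc (c m) (d m))
    (h1 : ∀ m : ℕ, f '' Set.Icc (a (m + 1)) (b (m + 1)) ⊆
      nbhdU (g '' Set.Icc (c m) (d m)) ((2:ℝ) ^ (-(m : ℤ))))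
    (h2 : ∀ m : ℕ, g '' Set.Icc (c (m + 1)) (d (m + 1)) ⊆
      nbhdU (f '' Set.Icc (a (m + 1)) (b (m + 1))) ((2:ℝ) ^ (-((m : ℤ) + 1)))) :
    f '' (⋂ m, Set.Icc (a m) (b m)) = g '' (⋂ m, Set.Icc (c m) (d m)) := by
  refine Subset.antisymm ?_ ?_
  · refine subset_image_iInter_of_eventually_subset_thickening (antitone_nat_of_succ_le hJnest)
      (fun _ => isCompact_Icc) (hg.mono (hJsub 0)) tendsto_two_zpow_neg_atTop
      (Eventually.of_forall fun k => ?_)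
    rw [← nbhdU_eq_thickening]
    exact (image_mono (iInter_subset _ (k + 1))).trans (h1 k)
  · refine subset_image_iInter_of_eventually_subset_thickening (antitone_nat_of_succ_le hInest)
      (fun _ => isCompact_Icc) (hf.mono (hIsub 0)) tendsto_two_zpow_neg_atTop
      (eventually_atTop.2 ⟨1, fun k hk => ?_⟩)
    obtain ⟨n, rfl⟩ := Nat.exists_eq_add_of_le' hk
    have hexp : (2:ℝ) ^ (-((n : ℤ) + 1)) = 2 ^ (-((n + 1 : ℕ) : ℤ)) := by push_cast; rfl
    rw [← nbhdU_eq_thickening, ← hexp]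
    exact (image_mono (iInter_subset (fun m => Icc (c m) (d m)) (n + 1))).trans (h2 n)

theorem images_of_nested_intersections_equal (f g : ℝ → Plane)
    (hf : ContinuousOn f (Set.Icc (-1:ℝ) 2)) (hg : ContinuousOn g (Set.Icc (-1:ℝ) 2))
    (a b c d : ℕ → ℝ)
    (hab : ∀ m, a m ≤ b m) (hcd : ∀ m, c m ≤ d m)
    (hIsub : ∀ m, Set.Icc (a m) (b m) ⊆ Set.Icc (-1:ℝ) 2)
    (hJsub : ∀ m, Set.Icc (c m) (d m) ⊆ Set.Icc (-1:ℝ) 2)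
    (hInest : ∀ m, Set.Icc (a (m + 1)) (b (m + 1)) ⊆ Set.Icc (a m) (b m))
    (hJnest : ∀ m, Set.Icc (c (m + 1)) (d (m + 1)) ⊆ Set.Icc (c m) (d m))
    (h1 : ∀ m : ℕ, f '' Set.Icc (a (m + 1)) (b (m + 1)) ⊆
      nbhdU (g '' Set.Icc (c m) (d m)) ((2:ℝ) ^ (-(m : ℤ))))
    (h2 : ∀ m : ℕ, g '' Set.Icc (c (m + 1)) (d (m + 1)) ⊆
      nbhdU (f '' Set.Icc (a (m + 1)) (b (m + 1))) ((2:ℝ) ^ (-((m : ℤ) + 1)))) :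
    f '' (⋂ m, Set.Icc (a m) (b m)) = g '' (⋂ m, Set.Icc (c m) (d m)) :=
  images_of_nested_intersections_equal_general f g hf hg a b c d hIsub hJsub hInest hJnest h1 h2
end
end
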